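/- Let x ∈ 𝔻, let τ ∈ (0,1] with S̃_Δ(x)(τ) > 0, and let x_n ∈ 𝔻 be a sequence with ‖x_n − x‖ → 0. Then Ã_τ(x_n) ≠ ∅ for all sufficiently large n, and every accumulation point of the sequence (R̃_τ(x_n)) belongs to Ã_τ(x), and every accumulation point of the sequence (L̃_τ(x_n)) belongs to Ã_τ(x). (Here α ∈ [0,1] is an accumulation point of a sequence of reals in [0,1] if some subsequence converges to α.) -/

import Mathlib

/-!
Uniform convergence moves every jump by at most `2‖xₙ - x‖`, so the largest jump of `xₙ`
on `[0,τ]` tends to that of `x`, and every largest-jump time of `xₙ` is a time where `x` jumps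
by almost its maximum. A càdlàg function has only small jumps in a punctured neighbourhood of
any point, so a convergent sequence of such times is eventually constant, and its limit is a
largest-jump time of `x`.
-/

open Filter Topology Set unitInterval

noncomputable section

open scoped Classical

instance : Fact ((0:ℝ) ≤ 1) := ⟨zero_le_one⟩

/-- The space `𝔻` of càdlàg functions on `[0,1]`: right-continuous everywhere with
finite left limits everywhere (conditions at the endpoints hold vacuously). -/
def Cadlag (x : I → ℝ) : Prop :=
  (∀ τ : I, Tendsto x (𝓝[>] τ) (𝓝 (x τ))) ∧ (∀ τ : I, ∃ l : ℝ, Tendsto x (𝓝[<] τ) (𝓝 l))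

/-- The sup-norm `‖x‖ = sup_{0 ≤ τ ≤ 1} |x(τ)|`. -/
def dNorm (x : I → ℝ) : ℝ := ⨆ τ : I, |x τ|

/-- The jump `Δx(τ) = x(τ) - x(τ-)` of `x` at `τ`, with `Δx(0) := 0`. -/
def jump (x : I → ℝ) (τ : I) : ℝ := if τ = 0 then 0 else x τ - Function.leftLim x τ

/-- The running supremum `S(x)(τ) = sup_{0 ≤ s ≤ τ} x(s)`. -/
def runSup (x : I → ℝ) (τ : I) : ℝ := sSup (x '' {s : I | s ≤ τ})

/-- The running absolute supremum `S̃(x)(τ) = sup_{0 ≤ s ≤ τ} |x(s)|`. -/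
def runAbsSup (x : I → ℝ) (τ : I) : ℝ := sSup ((fun s => |x s|) '' {s : I | s ≤ τ})

/-- The largest positive jump `S_{+Δ}(x)(τ) = sup_{0 ≤ s ≤ τ} Δx(s)`. -/
def posJumpSup (x : I → ℝ) (τ : I) : ℝ := sSup (jump x '' {s : I | s ≤ τ})

/-- The largest modulus jump `S̃_Δ(x)(τ) = sup_{0 ≤ s ≤ τ} |Δx(s)|`. -/
def modJumpSup (x : I → ℝ) (τ : I) : ℝ := sSup ((fun s => |jump x s|) '' {s : I | s ≤ τ})

/-- The first extremal positive trimming ("trim as you go") operator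
`T^{(1,+)}_{rim}(x) = x - S_{+Δ}(x)`. -/
def trimPos (x : I → ℝ) : I → ℝ := fun τ => x τ - posJumpSup x τ

/-- `Λ`: continuous strictly increasing bijections of `[0,1]` fixing the endpoints. -/
def IsTimeChange (l : I → I) : Prop := Continuous l ∧ StrictMono l ∧ l 0 = 0 ∧ l 1 = 1

/-- Convergence in the (strong) Skorokhod `J₁`-topology. -/
def J1Tendsto (xn : ℕ → I → ℝ) (x : I → ℝ) : Prop :=
  ∃ l : ℕ → I → I, (∀ n, IsTimeChange (l n)) ∧
    Tendsto (fun n => dNorm (fun τ => (l n τ : ℝ) - (τ : ℝ))) atTop (𝓝 0) ∧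
    Tendsto (fun n => dNorm (fun τ => xn n (l n τ) - x τ)) atTop (𝓝 0)

/-- `Ã_τ(x)`: the times `s ∈ (0,τ]` of the largest modulus jump of `x` on `[0,τ]`
(empty when `S̃_Δ(x)(τ) = 0`). -/
def tildeA (x : I → ℝ) (τ : I) : Set I :=
  {s : I | 0 < s ∧ s ≤ τ ∧ 0 < |jump x s| ∧ |jump x s| = modJumpSup x τ}

/-- `A⁺_τ(x)`: the times `s ∈ (0,τ]` of the largest positive jump of `x` on `[0,τ]`
(empty when `S_{+Δ}(x)(τ) = 0`). -/
def posA (x : I → ℝ) (τ : I) : Set I :=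
  {s : I | 0 < s ∧ s ≤ τ ∧ 0 < jump x s ∧ jump x s = posJumpSup x τ}

/-- The signed largest-modulus ("trim as you go") trimmer `𝔗_rim`:
`𝔗_rim(x)(τ) = x(τ) - Δx(L̃_τ(x))` if `Ã_τ(x) ≠ ∅`, `x(τ)` otherwise, where
`L̃_τ(x) = max Ã_τ(x)`. -/
def sgnModTrim (x : I → ℝ) : I → ℝ := fun τ =>
  if (tildeA x τ).Nonempty then x τ - jump x (sSup (tildeA x τ)) else x τ

/-- The record time ("lookback") trimmer:
`R_trim(x) = x - Δx(R₁(x))·1_{[R₁(x),1]}` if `A⁺₁(x) ≠ ∅`, `x` otherwise, where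
`R₁(x) = min A⁺₁(x)`. -/
def recordTrim (x : I → ℝ) : I → ℝ := fun τ =>
  if (posA x 1).Nonempty ∧ sInf (posA x 1) ≤ τ then x τ - jump x (sInf (posA x 1)) else x τ

/-- The modulus record time trimmer:
`R̃_trim(x) = x - Δx(R̃₁(x))·1_{[R̃₁(x),1]}` if `Ã₁(x) ≠ ∅`, `x` otherwise, where
`R̃₁(x) = min Ã₁(x)`. -/
def modRecordTrim (x : I → ℝ) : I → ℝ := fun τ =>
  if (tildeA x 1).Nonempty ∧ sInf (tildeA x 1) ≤ τ then x τ - jump x (sInf (tildeA x 1)) else x τ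

theorem bddAbove_range_of_isBoundedUnder_nhds {X α : Type*} [TopologicalSpace X] [CompactSpace X]
    [SemilatticeSup α] [Nonempty α] {f : X → α} (hf : ∀ t, IsBoundedUnder (· ≤ ·) (𝓝 t) f) :
    BddAbove (range f) := by
  rw [← image_univ]
  refine isCompact_univ.induction_on (p := fun s => BddAbove (f '' s)) (by simp)
    (fun s t hst ht => ht.mono (image_mono hst))
    (fun s t hs ht => by simpa only [image_union] using hs.union ht) fun t _ => ?_
  obtain ⟨b, hb⟩ := hf t
  exact ⟨{s | f s ≤ b}, mem_nhdsWithin_of_mem_nhds hb, b, by rintro _ ⟨s, hs, rfl⟩; exact hs⟩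

theorem csSup_mem_of_finite_inter_Ici {α : Type*} [ConditionallyCompleteLinearOrder α]
    {T : Set α} {c : α} (hT : T.Nonempty) (hT' : BddAbove T) (hfin : (T ∩ Ici c).Finite)
    (hc : c < sSup T) : sSup T ∈ T := by
  obtain ⟨v, hvT, hcv⟩ := exists_lt_of_lt_csSup hT hc
  have hne : (T ∩ Ici c).Nonempty := ⟨v, hvT, hcv.le⟩
  obtain ⟨hmT, hcm⟩ := hne.csSup_mem hfin
  suffices sSup T ≤ sSup (T ∩ Ici c) from
    (le_antisymm this (csSup_le_csSup hT' hne inter_subset_left)) ▸ hmT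
  refine csSup_le (hne.mono inter_subset_left) fun w hw => ?_
  rcases le_or_gt c w with hcw | hwc
  · exact le_csSup hfin.bddAbove ⟨hw, hcw⟩
  · exact hwc.le.trans hcm

theorem jump_zero (x : I → ℝ) : jump x 0 = 0 := if_pos rfl

theorem le_dNorm {f : I → ℝ} (hf : BddAbove (range fun s => |f s|)) (s : I) :
    |f s| ≤ dNorm f :=
  le_ciSup hf s

theorem nhdsLT_neBot_of_ne_zero {s : I} (hs : s ≠ 0) : (𝓝[<] s).NeBot :=
  nhdsLT_neBot_of_exists_lt ⟨0, unitInterval.pos_iff_ne_zero.2 hs⟩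

namespace Cadlag

variable {x y : I → ℝ}

theorem sub (hy : Cadlag y) (hx : Cadlag x) : Cadlag fun s => y s - x s := by
  refine ⟨fun t => (hy.1 t).sub (hx.1 t), fun t => ?_⟩
  obtain ⟨a, ha⟩ := hy.2 t
  obtain ⟨b, hb⟩ := hx.2 t
  exact ⟨a - b, ha.sub hb⟩

theorem tendsto_leftLim (hx : Cadlag x) {s : I} (hs : s ≠ 0) :
    Tendsto x (𝓝[<] s) (𝓝 (Function.leftLim x s)) := by
  have := nhdsLT_neBot_of_ne_zero hs
  obtain ⟨l, hl⟩ := hx.2 s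
  rwa [leftLim_eq_of_tendsto hl]

theorem isBoundedUnder_abs (hx : Cadlag x) (t : I) :
    IsBoundedUnder (· ≤ ·) (𝓝 t) fun s => |x s| := by
  obtain ⟨l, hl⟩ := hx.2 t
  obtain ⟨b₁, hb₁⟩ := hl.abs.isBoundedUnder_le
  obtain ⟨b₂, hb₂⟩ := (continuousWithinAt_Ioi_iff_Ici.1 (hx.1 t)).tendsto.abs.isBoundedUnder_le
  refine ⟨max b₁ b₂, ?_⟩
  rw [← nhdsLT_sup_nhdsGE, eventually_map, eventually_sup]
  exact ⟨hb₁.mono fun s hs => le_max_of_le_left hs, hb₂.mono fun s hs => le_max_of_le_right hs⟩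

theorem bddAbove_range_abs (hx : Cadlag x) : BddAbove (range fun s => |x s|) :=
  bddAbove_range_of_isBoundedUnder_nhds hx.isBoundedUnder_abs

theorem jump_sub (hy : Cadlag y) (hx : Cadlag x) (s : I) :
    jump (fun w => y w - x w) s = jump y s - jump x s := by
  rcases eq_or_ne s 0 with rfl | hs
  · simp only [jump_zero, sub_zero]
  have := nhdsLT_neBot_of_ne_zero hs
  have hlim := leftLim_eq_of_tendsto ((hy.tendsto_leftLim hs).sub (hx.tendsto_leftLim hs))
  simp only [jump, if_neg hs, hlim]
  ring

theorem abs_jump_le_of_eventually (hx : Cadlag x) {s : I} {a ε : ℝ}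
    (h : ∀ᶠ w in 𝓝 s, |x w - a| ≤ ε) : |jump x s| ≤ 2 * ε := by
  have hxs : |x s - a| ≤ ε := h.self_of_nhds
  rcases eq_or_ne s 0 with rfl | hs
  · rw [jump_zero, abs_zero]
    linarith [abs_nonneg (x 0 - a)]
  have := nhdsLT_neBot_of_ne_zero hs
  have hL : |Function.leftLim x s - a| ≤ ε :=
    le_of_tendsto ((hx.tendsto_leftLim hs).sub_const a).abs (h.filter_mono nhdsWithin_le_nhds)
  rw [jump, if_neg hs]
  calc |x s - Function.leftLim x s| ≤ |x s - a| + |a - Function.leftLim x s| := abs_sub_le _ _ _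
    _ ≤ 2 * ε := by rw [abs_sub_comm a]; linarith

theorem bddAbove_image_abs_jump (hx : Cadlag x) (A : Set I) :
    BddAbove ((fun s => |jump x s|) '' A) := by
  obtain ⟨M, hM⟩ := hx.bddAbove_range_abs
  refine ⟨2 * M, ?_⟩
  rintro _ ⟨s, -, rfl⟩
  refine hx.abs_jump_le_of_eventually (a := 0) (Eventually.of_forall fun w => ?_)
  simpa only [sub_zero] using hM (mem_range_self w)

theorem abs_jump_sub_le (hy : Cadlag y) (hx : Cadlag x) (s : I) :
    |jump y s - jump x s| ≤ 2 * dNorm fun w => y w - x w := by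
  rw [← hy.jump_sub hx]
  refine (hy.sub hx).abs_jump_le_of_eventually (a := 0) (Eventually.of_forall fun w => ?_)
  simpa only [sub_zero] using le_dNorm (hy.sub hx).bddAbove_range_abs w

theorem eventually_abs_jump_lt_of_tendsto (hx : Cadlag x) {U : Set I} (hU : IsOpen U) {t : I}
    {a : ℝ} (ha : Tendsto x (𝓝[U] t) (𝓝 a)) {c : ℝ} (hc : 0 < c) :
    ∀ᶠ s in 𝓝[U] t, |jump x s| < c := by
  have hnear : ∀ᶠ w in 𝓝[U] t, |x w - a| ≤ c / 4 := by
    filter_upwards [Metric.tendsto_nhds.1 ha (c / 4) (by positivity)] with w hw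
    exact (Real.dist_eq _ _ ▸ hw).le
  filter_upwards [eventually_eventually_nhdsWithin.2 hnear, self_mem_nhdsWithin] with s hs hsU
  rw [hU.nhdsWithin_eq hsU] at hs
  linarith [hx.abs_jump_le_of_eventually hs]

theorem eventually_abs_jump_lt (hx : Cadlag x) (t : I) {c : ℝ} (hc : 0 < c) :
    ∀ᶠ s in 𝓝[≠] t, |jump x s| < c := by
  obtain ⟨l, hl⟩ := hx.2 t
  rw [← nhdsLT_sup_nhdsGT, eventually_sup]
  exact ⟨hx.eventually_abs_jump_lt_of_tendsto isOpen_Iio hl hc,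
    hx.eventually_abs_jump_lt_of_tendsto isOpen_Ioi (hx.1 t) hc⟩

theorem finite_setOf_le_abs_jump (hx : Cadlag x) {c : ℝ} (hc : 0 < c) :
    {s | c ≤ |jump x s|}.Finite := by
  by_contra hinf
  obtain ⟨t, ht⟩ := Set.Infinite.exists_accPt_principal hinf
  obtain ⟨s, hle, hlt⟩ :=
    ((accPt_iff_frequently_nhdsNE.1 ht).and_eventually (hx.eventually_abs_jump_lt t hc)).exists
  exact hlt.not_ge hle

theorem le_modJumpSup (hx : Cadlag x) {s τ : I} (hs : s ≤ τ) :
    |jump x s| ≤ modJumpSup x τ :=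
  le_csSup (hx.bddAbove_image_abs_jump _) (mem_image_of_mem _ hs)

theorem tildeA_nonempty (hx : Cadlag x) {τ : I} (hS : 0 < modJumpSup x τ) :
    (tildeA x τ).Nonempty := by
  have hfin : ((fun s => |jump x s|) '' {s : I | s ≤ τ} ∩ Ici (modJumpSup x τ / 2)).Finite :=
    ((hx.finite_setOf_le_abs_jump (half_pos hS)).image _).subset
      (by rintro _ ⟨⟨s, -, rfl⟩, hs⟩; exact ⟨s, hs, rfl⟩)
  obtain ⟨s, hsτ, hs⟩ := csSup_mem_of_finite_inter_Ici (Nonempty.image _ ⟨τ, le_refl τ⟩)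
    (hx.bddAbove_image_abs_jump _) hfin (half_lt_self hS)
  have hsS : |jump x s| = modJumpSup x τ := hs
  have hs0 : s ≠ 0 := by
    rintro rfl
    rw [jump_zero, abs_zero] at hsS
    exact hS.ne hsS
  exact ⟨s, unitInterval.pos_iff_ne_zero.2 hs0, hsτ, hsS ▸ hS, hsS⟩

theorem tildeA_finite (hx : Cadlag x) (τ : I) : (tildeA x τ).Finite := by
  rcases (tildeA x τ).eq_empty_or_nonempty with h | ⟨s, -, -, hpos, hmax⟩
  · exact h ▸ finite_empty
  · exact (hx.finite_setOf_le_abs_jump (hmax ▸ hpos)).subset fun w hw => hw.2.2.2.ge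

theorem modJumpSup_le_add (hx : Cadlag x) (hy : Cadlag y) (τ : I) :
    modJumpSup x τ ≤ modJumpSup y τ + 2 * dNorm fun w => y w - x w := by
  refine csSup_le (Nonempty.image _ ⟨τ, le_refl τ⟩) ?_
  rintro _ ⟨s, hs, rfl⟩
  dsimp only
  linarith [hy.le_modJumpSup (s := s) hs, hy.abs_jump_sub_le hx s,
    abs_sub_abs_le_abs_sub (jump x s) (jump y s), abs_sub_comm (jump x s) (jump y s)]

theorem modJumpSup_sub_le_abs_jump (hx : Cadlag x) (hy : Cadlag y) {τ r : I}
    (hr : r ∈ tildeA y τ) :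
    modJumpSup x τ - 4 * dNorm (fun w => y w - x w) ≤ |jump x r| := by
  linarith [hx.modJumpSup_le_add hy τ, hy.abs_jump_sub_le hx r, hr.2.2.2,
    abs_sub_abs_le_abs_sub (jump y r) (jump x r)]

theorem mem_tildeA_of_tendsto {ι : Type*} {l : Filter ι} [l.NeBot] (hx : Cadlag x) {τ : I}
    (hS : 0 < modJumpSup x τ) {y : ι → I → ℝ} (hy : ∀ i, Cadlag (y i))
    (hconv : Tendsto (fun i => dNorm fun s => y i s - x s) l (𝓝 0)) {r : ι → I}
    (hr : ∀ᶠ i in l, r i ∈ tildeA (y i) τ) {α : I} (hα : Tendsto r l (𝓝 α)) :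
    α ∈ tildeA x τ := by
  set S := modJumpSup x τ
  set ε := fun i => dNorm fun s => y i s - x s
  have hnear : ∀ᶠ i in l, r i ≤ τ ∧ S - 4 * ε i ≤ |jump x (r i)| :=
    hr.mono fun i hi => ⟨hi.2.1, hx.modJumpSup_sub_le_abs_jump (hy i) hi⟩
  have hsmall : ∀ᶠ i in l, r i ≠ α → |jump x (r i)| < S / 2 :=
    hα.eventually (eventually_nhdsWithin_iff.1 (hx.eventually_abs_jump_lt α (half_pos hS)))
  -- jumps near `α` are small, so the large jumps at `r i` must sit exactly at `α`
  have hstable : ∀ᶠ i in l, r i = α := by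
    filter_upwards [hnear, hsmall, hconv.eventually_lt_const (by positivity : 0 < S / 8)]
      with i hi hsm hε
    by_contra hne
    linarith [hsm hne, hi.2]
  have hατ : α ≤ τ := le_of_tendsto hα (hnear.mono fun i hi => hi.1)
  have hge : S ≤ |jump x α| := by
    have hlim : Tendsto (fun i => S - 4 * ε i) l (𝓝 S) := by
      simpa using tendsto_const_nhds.sub (hconv.const_mul 4)
    refine le_of_tendsto hlim ?_
    filter_upwards [hnear, hstable] with i hi hrα
    exact hrα ▸ hi.2
  have hα0 : α ≠ 0 := by
    rintro rfl
    rw [jump_zero, abs_zero] at hge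
    exact hS.not_ge hge
  exact ⟨unitInterval.pos_iff_ne_zero.2 hα0, hατ, hS.trans_le hge,
    le_antisymm (hx.le_modJumpSup hατ) hge⟩

end Cadlag

theorem stmt14_general (x : I → ℝ) (hx : Cadlag x) (τ : I)
    (hS : 0 < modJumpSup x τ)
    (xn : ℕ → I → ℝ) (hxn : ∀ n, Cadlag (xn n))
    (hconv : Tendsto (fun n => dNorm (fun s => xn n s - x s)) atTop (𝓝 0)) :
    (∀ᶠ n in atTop, (tildeA (xn n) τ).Nonempty) ∧
    (∀ (α : I) (φ : ℕ → ℕ), StrictMono φ →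
      Tendsto (fun k => sInf (tildeA (xn (φ k)) τ)) atTop (𝓝 α) → α ∈ tildeA x τ) ∧
    (∀ (α : I) (φ : ℕ → ℕ), StrictMono φ →
      Tendsto (fun k => sSup (tildeA (xn (φ k)) τ)) atTop (𝓝 α) → α ∈ tildeA x τ) := by
  have hnonempty : ∀ᶠ n in atTop, (tildeA (xn n) τ).Nonempty := by
    filter_upwards [hconv.eventually_lt_const (by positivity : 0 < modJumpSup x τ / 4)] with n hn
    exact (hxn n).tildeA_nonempty (by linarith [hx.modJumpSup_le_add (hxn n) τ])
  have haccum : ∀ (α : I) (φ : ℕ → ℕ), StrictMono φ → ∀ r : ℕ → I,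
      (∀ k, (tildeA (xn (φ k)) τ).Nonempty → r k ∈ tildeA (xn (φ k)) τ) →
      Tendsto r atTop (𝓝 α) → α ∈ tildeA x τ := fun α φ hφ r hr hα =>
    hx.mem_tildeA_of_tendsto hS (fun k => hxn (φ k)) (hconv.comp hφ.tendsto_atTop)
      ((hφ.tendsto_atTop.eventually hnonempty).mono hr) hα
  exact ⟨hnonempty,
    fun α φ hφ => haccum α φ hφ _ fun k hk => hk.csInf_mem ((hxn (φ k)).tildeA_finite τ),
    fun α φ hφ => haccum α φ hφ _ fun k hk => hk.csSup_mem ((hxn (φ k)).tildeA_finite τ)⟩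

/-- if `‖x_n - x‖ → 0` and `S̃_Δ(x)(τ) > 0`, then `Ã_τ(x_n) ≠ ∅`
eventually, and every accumulation point of `(R̃_τ(x_n))` and of `(L̃_τ(x_n))`
belongs to `Ã_τ(x)`. -/
theorem stmt14 (x : I → ℝ) (hx : Cadlag x) (τ : I) (hτ : τ ≠ 0)
    (hS : 0 < modJumpSup x τ)
    (xn : ℕ → I → ℝ) (hxn : ∀ n, Cadlag (xn n))
    (hconv : Tendsto (fun n => dNorm (fun s => xn n s - x s)) atTop (𝓝 0)) :
    (∀ᶠ n in atTop, (tildeA (xn n) τ).Nonempty) ∧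
    (∀ (α : I) (φ : ℕ → ℕ), StrictMono φ →
      Tendsto (fun k => sInf (tildeA (xn (φ k)) τ)) atTop (𝓝 α) → α ∈ tildeA x τ) ∧
    (∀ (α : I) (φ : ℕ → ℕ), StrictMono φ →
      Tendsto (fun k => sSup (tildeA (xn (φ k)) τ)) atTop (𝓝 α) → α ∈ tildeA x τ) :=
  stmt14_general x hx τ hS xn hxn hconv
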